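/- arXiv:1405.3706 — 8 statements merged into one kernel-verified Lean document; each statement's English description precedes it below -/
import Mathlib

section
/- Let f : 𝔹 → ℍ be a function such that for every choice of three points z₁, z₂, z₃ ∈ 𝔹 the 3×3 Pick matrix P_f(z₁,z₂,z₃) is positive semidefinite. Let γ ∈ 𝔹 with Im(γ) ≠ 0, and set α = Re(γ) + |Im(γ)|·i (so α ∈ 𝔹 is conjugate to γ and has zero j- and k-components). Then f(γ) = (γ − star γ)⁻¹·(γ − star α)·f(α) + (γ − star γ)⁻¹·(γ − α)·f(star α). -/
open Quaternion Filter Matrix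

noncomputable section

/-- The imaginary unit `i` of the real quaternions. -/
def qi : ℍ := ⟨0, 1, 0, 0⟩

/-- The imaginary unit `j` of the real quaternions. -/
def qj : ℍ := ⟨0, 0, 1, 0⟩

/-- The Pick matrix of `f : ℍ → ℍ` at the points `z 0, …, z (n-1)` of the unit ball:
its `(i,j)` entry is `∑ₖ (z i)^k (1 - f(z i) * star f(z j)) (star (z j))^k`. -/
def pickMatrix {n : ℕ} (f : ℍ → ℍ) (z : Fin n → ℍ) : Matrix (Fin n) (Fin n) ℍ :=
  Matrix.of fun i j => ∑' k : ℕ, z i ^ k * (1 - f (z i) * star (f (z j))) * (star (z j)) ^ k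

/-- A quaternionic matrix is positive semidefinite if every quadratic form
`∑ᵢⱼ star (v i) * P i j * v j` is a nonnegative real scalar quaternion. -/
def QPosSemidef {n : ℕ} (P : Matrix (Fin n) (Fin n) ℍ) : Prop :=
  ∀ v : Fin n → ℍ, ∃ r : ℝ, 0 ≤ r ∧ (∑ i, ∑ j, star (v i) * P i j * v j) = (r : ℍ)

/-- `f` is left-regular on the unit ball: it is given there by an (absolutely convergent)
power series with quaternionic coefficients on the right. -/
def LeftRegular (f : ℍ → ℍ) : Prop :=
  ∃ c : ℕ → ℍ,
    Filter.limsup (fun k : ℕ => ‖c k‖ ^ (1 / (k : ℝ))) Filter.atTop ≤ 1 ∧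
    ∀ α : ℍ, ‖α‖ < 1 → f α = ∑' k : ℕ, α ^ k * c k

/-- The `n × n` lower-triangular Toeplitz matrix built from a sequence. -/
def toeplitz {R : Type*} [Zero R] (n : ℕ) (g : ℕ → R) : Matrix (Fin n) (Fin n) R :=
  Matrix.of fun i j => if (j : ℕ) ≤ (i : ℕ) then g ((i : ℕ) - (j : ℕ)) else 0

/-!
Put `z = (γ, α, ᾱ)`. The conjugates `z̄ᵢ` share the real part `x` and the norm of `γ`, so each
satisfies `q² = 2x q - |γ|²`, and for any `v` the sequence `k ↦ ∑ᵢ z̄ᵢᵏ vᵢ` obeys a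
second-order linear recurrence with real coefficients. For `v = (γ - γ̄, γ̄ - α, γ̄ - ᾱ)` it
vanishes at `k = 0, 1`, hence identically. Expanding the Pick form termwise gives
`v* P v = ∑ₖ (|aₖ|² - |bₖ|²)` with `aₖ = ∑ᵢ z̄ᵢᵏ vᵢ = 0` and `bₖ = ∑ᵢ conj(f zᵢ) z̄ᵢᵏ vᵢ`,
so positivity forces every `bₖ = 0`; conjugating `b₀ = 0` gives
`(γ - γ̄) f γ = (γ - ᾱ) f α + (γ - α) f ᾱ`.
-/

lemma quadForm_one_sub_mul_star_eq {R ι : Type*} [Ring R] [StarRing R] [Fintype ι]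
    (x y v : ι → R) :
    ∑ i, ∑ j, star (v i) * (x i * (1 - y i * star (y j)) * star (x j)) * v j =
      star (∑ i, star (x i) * v i) * ∑ i, star (x i) * v i -
        star (∑ i, star (y i) * star (x i) * v i) * ∑ i, star (y i) * star (x i) * v i := by
  simp only [star_sum, Finset.sum_mul_sum, ← Finset.sum_sub_distrib, star_mul, star_star]
  noncomm_ring

@[simp] lemma qi_re : qi.re = 0 := rfl
@[simp] lemma qi_imI : qi.imI = 1 := rfl
@[simp] lemma qi_imJ : qi.imJ = 0 := rfl
@[simp] lemma qi_imK : qi.imK = 0 := rfl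

namespace Quaternion

lemma sq_eq_two_re_mul_sub_normSq (q : ℍ) : q ^ 2 = (2 * q.re : ℍ) * q - normSq q := by
  rw [← self_add_star, add_mul, ← star_mul_self, sq]
  abel

lemma sum_pow_mul_eq_zero_of_re_normSq_eq {ι : Type*} [Fintype ι] {z v : ι → ℍ} {r N : ℝ}
    (hre : ∀ i, (z i).re = r) (hN : ∀ i, normSq (z i) = N)
    (h₀ : ∑ i, v i = 0) (h₁ : ∑ i, z i * v i = 0) (k : ℕ) :
    ∑ i, z i ^ k * v i = 0 := by
  induction k using Nat.twoStepInduction with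
  | zero => simpa using h₀
  | one => simpa using h₁
  | more k ih₀ ih₁ =>
    have hstep (i : ι) :
        z i ^ (k + 2) * v i = (2 * r : ℍ) * (z i ^ (k + 1) * v i) - N * (z i ^ k * v i) := by
      rw [add_comm k, pow_add, sq_eq_two_re_mul_sub_normSq, hre, hN, sub_mul, sub_mul,
        mul_assoc _ (z i), ← pow_succ']
      simp only [mul_assoc]
    simp only [hstep, Finset.sum_sub_distrib, ← Finset.mul_sum, ih₀, ih₁, mul_zero, sub_zero]

lemma sum_star_pow_mul_slice_eq_zero {γ α : ℍ} (hre : α.re = γ.re) (hN : normSq α = normSq γ)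
    (k : ℕ) :
    ∑ i, star (![γ, α, star α] i) ^ k * ![γ - star γ, star γ - α, star γ - star α] i = 0 := by
  refine sum_pow_mul_eq_zero_of_re_normSq_eq (r := γ.re) (N := normSq γ) (fun i => ?_)
    (fun i => ?_) ?_ ?_ k
  · fin_cases i <;> simp [hre]
  · fin_cases i <;> simp [hN]
  · simp only [Fin.sum_univ_three, Matrix.cons_val]
    calc γ - star γ + (star γ - α) + (star γ - star α) = (γ + star γ) - (α + star α) := by abel
      _ = 0 := by rw [self_add_star, self_add_star, hre, sub_self]
  · simp only [Fin.sum_univ_three, Matrix.cons_val, star_star]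
    calc star γ * (γ - star γ) + star α * (star γ - α) + α * (star γ - star α)
        = star γ * γ - star γ ^ 2 + (α + star α) * star γ - star α * α - α * star α := by
          noncomm_ring
      _ = normSq γ - (2 * γ.re * star γ - normSq γ) + 2 * γ.re * star γ - normSq γ - normSq γ := by
          rw [star_mul_self, sq_eq_two_re_mul_sub_normSq, re_star, normSq_star, self_add_star, hre,
            star_mul_self, self_mul_star, hN]
      _ = 0 := by abel

lemma normSq_eq_re_sq_add_norm_im_sq (q : ℍ) : normSq q = q.re ^ 2 + ‖q.im‖ ^ 2 := by
  rw [sq ‖q.im‖, ← normSq_eq_norm_mul_self, normSq_def', normSq_def']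
  simp only [re_im, imI_im, imJ_im, imK_im]
  ring

lemma normSq_coe_add_coe_mul_qi (x y : ℝ) : normSq ((x : ℍ) + (y : ℍ) * qi) = x ^ 2 + y ^ 2 := by
  simp [normSq_def']

lemma summable_pow_mul_mul_star_pow {a b : ℍ} (ha : ‖a‖ < 1) (hb : ‖b‖ < 1) (c : ℍ) :
    Summable fun k : ℕ => a ^ k * c * star b ^ k := by
  refine Summable.of_norm_bounded ((summable_geometric_of_lt_one (by positivity)
    (mul_lt_one_of_nonneg_of_lt_one_left (norm_nonneg a) ha hb.le)).mul_left ‖c‖) fun k => ?_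
  rw [norm_mul, norm_mul, norm_pow, norm_pow, norm_star, mul_pow]
  exact le_of_eq (by ring)

end Quaternion

section Pick

variable {n : ℕ} (f : ℍ → ℍ) {z : Fin n → ℍ}

lemma hasSum_pickMatrix_quadForm (hz : ∀ i, ‖z i‖ < 1) (v : Fin n → ℍ) :
    HasSum (fun k : ℕ =>
        star (∑ i, star (z i) ^ k * v i) * ∑ i, star (z i) ^ k * v i -
          star (∑ i, star (f (z i)) * star (z i) ^ k * v i) *
            ∑ i, star (f (z i)) * star (z i) ^ k * v i)
      (∑ i, ∑ j, star (v i) * pickMatrix f z i j * v j) := by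
  have hentry (i j : Fin n) : HasSum
      (fun k : ℕ => star (v i) * (z i ^ k * (1 - f (z i) * star (f (z j))) * star (z j) ^ k) * v j)
      (star (v i) * pickMatrix f z i j * v j) :=
    ((summable_pow_mul_mul_star_pow (hz i) (hz j) _).hasSum.mul_left _).mul_right _
  convert hasSum_sum fun i _ => hasSum_sum fun j _ => hentry i j using 1
  funext k
  simp only [← star_pow, quadForm_one_sub_mul_star_eq]

lemma sum_star_mul_eq_zero_of_posSemidef_pickMatrix (hP : QPosSemidef (pickMatrix f z))
    (hz : ∀ i, ‖z i‖ < 1) {v : Fin n → ℍ} (hv : ∀ k : ℕ, ∑ i, star (z i) ^ k * v i = 0) :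
    ∑ i, star (f (z i)) * v i = 0 := by
  set b : ℕ → ℍ := fun k => ∑ i, star (f (z i)) * star (z i) ^ k * v i
  obtain ⟨r, hr, hform⟩ := hP v
  have hsum : HasSum (fun k => normSq (b k)) (-r) := by
    have h := (hasSum_pickMatrix_quadForm f hz v).neg
    simp only [hv, hform, star_zero, zero_mul, zero_sub, neg_neg, star_mul_self] at h
    rwa [← coe_neg, hasSum_coe] at h
  have hr0 : r = 0 := le_antisymm (neg_nonneg.mp (hsum.nonneg fun _ => normSq_nonneg)) hr
  rw [hr0, neg_zero, hasSum_zero_iff_of_nonneg fun _ => normSq_nonneg] at hsum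
  simpa [b] using congrFun hsum 0

end Pick

/-- Under positivity of all `3×3` Pick matrices, the value of `f` at a non-complex point `γ`
is determined by its values at the two complex points `α, star α` of the conjugacy class
of `γ`, where `α = Re γ + |Im γ|·i`. -/
theorem value_from_complex_slice (f : ℍ → ℍ)
    (hpick : ∀ z : Fin 3 → ℍ, (∀ i, ‖z i‖ < 1) → QPosSemidef (pickMatrix f z))
    (γ : ℍ) (hγ : ‖γ‖ < 1) (him : γ.im ≠ 0)
    (α : ℍ) (hα : α = (γ.re : ℍ) + (‖γ.im‖ : ℍ) * qi) :
    f γ = (γ - star γ)⁻¹ * (γ - star α) * f α +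
          (γ - star γ)⁻¹ * (γ - α) * f (star α) := by
  have hre : α.re = γ.re := by simp [hα]
  have hN : normSq α = normSq γ := by
    rw [hα, normSq_coe_add_coe_mul_qi, normSq_eq_re_sq_add_norm_im_sq]
  have hnorm : ‖α‖ = ‖γ‖ := by
    rwa [normSq_eq_norm_mul_self, normSq_eq_norm_mul_self,
      mul_self_inj (norm_nonneg _) (norm_nonneg _)] at hN
  have hz : ∀ i, ‖![γ, α, star α] i‖ < 1 := by
    intro i; fin_cases i <;> simp [hnorm, hγ]
  have hne : γ - star γ ≠ 0 := fun h => him <| by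
    simpa using congrArg im (star_eq_self.mp (sub_eq_zero.mp h).symm)
  have hrel := congrArg star <| sum_star_mul_eq_zero_of_posSemidef_pickMatrix f (hpick _ hz) hz
    (sum_star_pow_mul_slice_eq_zero hre hN)
  simp only [Fin.sum_univ_three, Matrix.cons_val, star_add, star_mul, star_sub, star_star,
    star_zero] at hrel
  rw [← neg_sub γ, neg_mul, add_assoc, neg_add_eq_zero] at hrel
  rw [mul_assoc, mul_assoc, ← mul_add, eq_inv_mul_iff_mul_eq₀ hne, hrel]
end
end

section
/- Let z₁,…,z_n ∈ 𝔹 and let T = diag(z₁,…,z_n) ∈ ℍ^{n×n}. Then for every matrix Q ∈ ℍ^{n×n} the Stein equation P − T·P·T* = Q has a unique solution P ∈ ℍ^{n×n}, given entrywise by P_{ij} = ∑_{k=0}^∞ z_i^k · Q_{ij} · (star z_j)^k (an absolutely convergent series). -/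
open Quaternion Filter Matrix

noncomputable section

lemma stein_summable (a b q : ℍ) (h : ‖a‖ * ‖b‖ < 1) :
    Summable fun k : ℕ => ‖a ^ k * q * b ^ k‖ := by
  have he : ∀ k : ℕ, ‖a ^ k * q * b ^ k‖ = ‖q‖ * (‖a‖ * ‖b‖) ^ k := by
    intro k
    rw [norm_mul, norm_mul, norm_pow, norm_pow, mul_pow]
    ring
  simp only [he]
  exact (summable_geometric_of_lt_one (by positivity) h).mul_left _

lemma stein_sol (a b q : ℍ) (h : ‖a‖ * ‖b‖ < 1) :
    (∑' k : ℕ, a ^ k * q * b ^ k) - a * (∑' k : ℕ, a ^ k * q * b ^ k) * b = q := by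
  have hs : Summable fun k : ℕ => a ^ k * q * b ^ k :=
    (stein_summable a b q h).of_norm
  have h1 : a * (∑' k : ℕ, a ^ k * q * b ^ k) * b
      = ∑' k : ℕ, a ^ (k + 1) * q * b ^ (k + 1) := by
    rw [← tsum_mul_left, ← tsum_mul_right]
    congr 1; funext k
    rw [pow_succ' a, pow_succ b]
    simp [mul_assoc]
  have h2 := Summable.tsum_eq_zero_add hs
  simp only [pow_zero, one_mul, mul_one] at h2
  rw [h1, h2]
  abel

lemma stein_uniq (a b : ℍ) (h : ‖a‖ * ‖b‖ < 1) {x : ℍ} (hx : x = a * x * b) : x = 0 := by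
  by_contra hne
  have hn : ‖x‖ = ‖a‖ * ‖x‖ * ‖b‖ := by
    conv_lhs => rw [hx]
    rw [norm_mul, norm_mul]
  have hpos : 0 < ‖x‖ := norm_pos_iff.mpr hne
  nlinarith


/-- For `T = diag (z₁, …, zₙ)` with all `|zᵢ| < 1`, the Stein equation `P - T P T* = Q`
has a unique solution, given entrywise by the absolutely convergent series
`P i j = ∑ₖ (z i)^k * Q i j * (star (z j))^k`. -/
theorem stein_unique_solution {n : ℕ} (z : Fin n → ℍ) (hz : ∀ i, ‖z i‖ < 1)
    (Q : Matrix (Fin n) (Fin n) ℍ) :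
    (∀ i j, Summable fun k : ℕ => ‖z i ^ k * Q i j * (star (z j)) ^ k‖) ∧
    ∀ P : Matrix (Fin n) (Fin n) ℍ,
      (P - Matrix.diagonal z * P * (Matrix.diagonal z)ᴴ = Q ↔
        P = Matrix.of fun i j => ∑' k : ℕ, z i ^ k * Q i j * (star (z j)) ^ k) := by
  have hab : ∀ i j : Fin n, ‖z i‖ * ‖star (z j)‖ < 1 := by
    intro i j
    rw [norm_star]
    have h1 := hz i; have h2 := hz j
    nlinarith [norm_nonneg (z i), norm_nonneg (z j)]
  refine ⟨fun i j => stein_summable _ _ _ (hab i j), fun P => ?_⟩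
  have key : ∀ (M : Matrix (Fin n) (Fin n) ℍ) i j,
      (Matrix.diagonal z * M * (Matrix.diagonal z)ᴴ) i j = z i * M i j * star (z j) := by
    intro M i j
    simp [Matrix.diagonal_conjTranspose, Matrix.mul_diagonal, Matrix.diagonal_mul]
  constructor
  · intro hP
    funext i j
    have hij : P i j - z i * P i j * star (z j) = Q i j := by
      have := congrFun (congrFun hP i) j
      simpa [Matrix.sub_apply, key P i j] using this
    have hS := stein_sol (z i) (star (z j)) (Q i j) (hab i j)
    set S := ∑' k : ℕ, z i ^ k * Q i j * (star (z j)) ^ k with hSdef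
    have e2 : (P i j - S) - z i * (P i j - S) * star (z j) = 0 := by
      have e : (P i j - S) - z i * (P i j - S) * star (z j)
          = (P i j - z i * P i j * star (z j)) - (S - z i * S * star (z j)) := by
        rw [mul_sub, sub_mul]; abel
      rw [e, hij, hS, sub_self]
    have hx : P i j - S = z i * (P i j - S) * star (z j) := sub_eq_zero.mp e2
    have := stein_uniq (z i) (star (z j)) (hab i j) hx
    have hPS : P i j = S := sub_eq_zero.mp this
    simpa [Matrix.of_apply] using hPS
  · intro hP
    subst hP
    funext i j
    simp only [Matrix.sub_apply, key, Matrix.of_apply]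
    exact stein_sol (z i) (star (z j)) (Q i j) (hab i j)
end
end

section
/- If α, β ∈ ℍ satisfy Re(α) = Re(β), |α| = |β|, and α ≠ β, then (α − β)·α·(α − β)⁻¹ = star β. -/
open Quaternion Filter Matrix

noncomputable section

/-!
Every quaternion is a root of its characteristic polynomial, `a * a = 2 Re(a) a - |a|²`, so
quaternions with the same real part and norm are roots of the same quadratic. Substituting
`star b = 2 Re(b) - b`, the difference `(a - b) * a - star b * (a - b)` then collapses to zero.
-/

namespace Quaternion

variable {R : Type*} [CommRing R]

theorem mul_self_eq_two_re_mul_sub_normSq (a : ℍ[R]) :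
    a * a = ((2 * a.re : R) : ℍ[R]) * a - ((normSq a : R) : ℍ[R]) := by
  rw [← self_add_star', add_mul, star_mul_self, add_sub_cancel_right]

theorem sub_mul_self_eq_star_mul_sub {a b : ℍ[R]} (hre : a.re = b.re)
    (hnormSq : normSq a = normSq b) :
    (a - b) * a = star b * (a - b) := by
  have hstar : star b = ((2 * a.re : R) : ℍ[R]) - b := by
    rw [hre, ← self_add_star', add_sub_cancel_left]
  have hb := mul_self_eq_two_re_mul_sub_normSq b
  rw [← hre, ← hnormSq] at hb
  rw [hstar, sub_mul, mul_sub, sub_mul, sub_mul, mul_self_eq_two_re_mul_sub_normSq a, hb]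
  abel

end Quaternion

/-- If `α` and `β` are distinct conjugate quaternions, then `(α - β) α (α - β)⁻¹ = star β`. -/
theorem conj_by_difference (α β : ℍ) (hre : α.re = β.re) (hnorm : ‖α‖ = ‖β‖)
    (hne : α ≠ β) :
    (α - β) * α * (α - β)⁻¹ = star β := by
  have hnormSq : normSq α = normSq β := by
    rw [normSq_eq_norm_mul_self, normSq_eq_norm_mul_self, hnorm]
  rw [mul_inv_eq_iff_eq_mul₀ (sub_ne_zero.mpr hne)]
  exact sub_mul_self_eq_star_mul_sub hre hnormSq
end
end

section
/- Let α, β, γ ∈ ℍ be pairwise distinct quaternions with equal real parts and equal norms (i.e., Re(α) = Re(β) = Re(γ) and |α| = |β| = |γ|, so they are pairwise conjugate). Then for every natural number k, γ^k = (γ − β)·(α − β)⁻¹·α^k + (α − γ)·(α − β)⁻¹·β^k. -/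
open Quaternion Filter Matrix

noncomputable section

lemma quad_aux (x : ℍ) : x^2 = ((2 * x.re : ℝ) : ℍ) * x - ((Quaternion.normSq x : ℝ) : ℍ) := by
  have h1 : star x = ((2 * x.re : ℝ) : ℍ) - x := eq_sub_of_add_eq (Quaternion.star_add_self' x)
  have h2 : x * star x = ((Quaternion.normSq x : ℝ) : ℍ) := Quaternion.self_mul_star x
  have h3 : x ^ 2 = x * ((2 * x.re : ℝ) : ℍ) - x * star x := by
    rw [h1]; noncomm_ring
  rw [h3, h2, Quaternion.coe_commutes]

lemma swap_aux (α β : ℍ) (hα : α ≠ 0) (hβ : β ≠ 0) :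
    α * (α - β)⁻¹ * β = β * (α - β)⁻¹ * α := by
  have key : β⁻¹ * (α - β) * α⁻¹ = β⁻¹ - α⁻¹ := by
    rw [mul_sub, sub_mul, mul_assoc, mul_inv_cancel₀ hα, inv_mul_cancel₀ hβ, mul_one, one_mul]
  have key2 : α⁻¹ * (α - β) * β⁻¹ = β⁻¹ - α⁻¹ := by
    rw [mul_sub, sub_mul, inv_mul_cancel₀ hα, mul_assoc, mul_inv_cancel₀ hβ, mul_one, one_mul]
  have h1 : α * (α - β)⁻¹ * β = (β⁻¹ * (α - β) * α⁻¹)⁻¹ := by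
    rw [_root_.mul_inv_rev, _root_.mul_inv_rev, inv_inv, inv_inv, mul_assoc]
  have h2 : β * (α - β)⁻¹ * α = (α⁻¹ * (α - β) * β⁻¹)⁻¹ := by
    rw [_root_.mul_inv_rev, _root_.mul_inv_rev, inv_inv, inv_inv, mul_assoc]
  rw [h1, h2, key, key2]

/-- For three distinct pairwise conjugate quaternions `α, β, γ`, every power of `γ` is the
corresponding combination of the powers of `α` and `β`. -/
theorem power_interpolation (α β γ : ℍ)
    (hab : α ≠ β) (hbg : β ≠ γ) (hag : α ≠ γ)
    (hre1 : α.re = β.re) (hre2 : β.re = γ.re)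
    (hn1 : ‖α‖ = ‖β‖) (hn2 : ‖β‖ = ‖γ‖) (k : ℕ) :
    γ ^ k = (γ - β) * (α - β)⁻¹ * α ^ k + (α - γ) * (α - β)⁻¹ * β ^ k := by
  
  have hd : α - β ≠ 0 := sub_ne_zero.mpr hab
  have hα0 : α ≠ 0 := fun h => hab (by rw [h]; symm; rw [← norm_eq_zero, ← hn1, h, norm_zero])
  have hβ0 : β ≠ 0 := fun h => hab (by rw [h, ← norm_eq_zero, hn1, h, norm_zero])
  set t : ℝ := 2 * β.re with ht
  set c : ℝ := Quaternion.normSq β with hc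
  have hnsa : Quaternion.normSq α = c := by
    rw [hc, Quaternion.normSq_eq_norm_mul_self, Quaternion.normSq_eq_norm_mul_self, hn1]
  have hnsg : Quaternion.normSq γ = c := by
    rw [hc, Quaternion.normSq_eq_norm_mul_self, Quaternion.normSq_eq_norm_mul_self, hn2]
  have hqa : α^2 = (t : ℍ) * α - (c : ℍ) := by rw [quad_aux, hre1, hnsa]
  have hqb : β^2 = (t : ℍ) * β - (c : ℍ) := by rw [quad_aux]
  have hqg : γ^2 = (t : ℍ) * γ - (c : ℍ) := by rw [quad_aux, ← hre2, hnsg]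
  have step : ∀ x : ℍ, x^2 = (t : ℍ) * x - (c : ℍ) →
      ∀ j : ℕ, x^(j+2) = (t : ℍ) * x^(j+1) - (c : ℍ) * x^j := by
    intro x hx j
    have h : x^(j+2) = x^2 * x^j := by rw [show j+2 = 2+j from by omega, pow_add]
    rw [h, hx, sub_mul, mul_assoc, ← pow_succ']
  have hcomm : ∀ (r : ℝ) (A x : ℍ), (r : ℍ) * (A * x) = A * ((r : ℍ) * x) := by
    intro r A x; rw [← mul_assoc, Quaternion.coe_commutes, mul_assoc]
  induction k using Nat.strong_induction_on with
  | _ k ih =>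
    match k with
    | 0 =>
      simp only [pow_zero, mul_one]
      rw [← add_mul, show γ - β + (α - γ) = α - β from by abel, mul_inv_cancel₀ hd]
    | 1 =>
      simp only [pow_one]
      have hs := swap_aux α β hα0 hβ0
      have h1 : (γ - β) * (α - β)⁻¹ * α + (α - γ) * (α - β)⁻¹ * β
          = γ * ((α - β)⁻¹ * (α - β)) + (α * (α - β)⁻¹ * β - β * (α - β)⁻¹ * α) := by
        noncomm_ring
      rw [h1, inv_mul_cancel₀ hd, hs, sub_self, mul_one, add_zero]
    | (j+2) =>
      have h0 := ih j (by omega)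
      have h1 := ih (j+1) (by omega)
      calc γ^(j+2) = (t : ℍ) * γ^(j+1) - (c : ℍ) * γ^j := step γ hqg j
        _ = (t : ℍ) * ((γ - β) * (α - β)⁻¹ * α^(j+1) + (α - γ) * (α - β)⁻¹ * β^(j+1))
            - (c : ℍ) * ((γ - β) * (α - β)⁻¹ * α^j + (α - γ) * (α - β)⁻¹ * β^j) := by
            rw [← h1, ← h0]
        _ = (γ - β) * (α - β)⁻¹ * ((t : ℍ) * α^(j+1) - (c : ℍ) * α^j)
            + (α - γ) * (α - β)⁻¹ * ((t : ℍ) * β^(j+1) - (c : ℍ) * β^j) := by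
            rw [mul_add, mul_add, hcomm t, hcomm t, hcomm c, hcomm c, mul_sub, mul_sub]
            abel
        _ = (γ - β) * (α - β)⁻¹ * α^(j+2) + (α - γ) * (α - β)⁻¹ * β^(j+2) := by
            rw [← step α hqa j, ← step β hqb j]
end
end

section
/- Let f : 𝔹 → ℍ be left-regular, and let α, β, γ ∈ 𝔹 be pairwise distinct with equal real parts and equal norms (pairwise conjugate). Then f(γ) = (γ − β)·(α − β)⁻¹·f(α) + (α − γ)·(α − β)⁻¹·f(β). -/
open Quaternion Filter Matrix

noncomputable section

lemma quat_mul_self (x : ℍ) : x * x = ((2 * x.re : ℝ) : ℍ) * x - ((‖x‖ * ‖x‖ : ℝ) : ℍ) := by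
  have h1 : x = ((2 * x.re : ℝ) : ℍ) - star x := by
    rw [← Quaternion.self_add_star' x]; abel
  have h2 : x * star x = ((‖x‖ * ‖x‖ : ℝ) : ℍ) := by
    rw [Quaternion.self_mul_star, Quaternion.normSq_eq_norm_mul_self]
  calc x * x = x * (((2 * x.re : ℝ) : ℍ) - star x) := by rw [← h1]
    _ = x * ((2 * x.re : ℝ) : ℍ) - x * star x := by rw [mul_sub]
    _ = ((2 * x.re : ℝ) : ℍ) * x - ((‖x‖ * ‖x‖ : ℝ) : ℍ) := by
        rw [← Quaternion.coe_commutes, h2]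

lemma quat_pow_decomp (t s : ℝ) :
    ∃ a b : ℕ → ℝ, ∀ x : ℍ, x.re = t → ‖x‖ * ‖x‖ = s →
      ∀ k, x ^ k = ((a k : ℝ) : ℍ) + ((b k : ℝ) : ℍ) * x := by
  classical
  set r : ℕ → ℝ × ℝ := fun k =>
    Nat.rec ((1 : ℝ), (0 : ℝ)) (fun _ p => (-s * p.2, p.1 + 2 * t * p.2)) k with hr
  refine ⟨fun k => (r k).1, fun k => (r k).2, ?_⟩
  intro x hx hxs
  have hsq : x * x = ((2 * t : ℝ) : ℍ) * x - ((s : ℝ) : ℍ) := by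
    rw [quat_mul_self, hx, hxs]
  intro k
  induction k with
  | zero => show (1 : ℍ) = ((1 : ℝ) : ℍ) + ((0 : ℝ) : ℍ) * x; simp
  | succ k ih =>
    rw [pow_succ, ih]
    show ((((r k).1 : ℝ) : ℍ) + (((r k).2 : ℝ) : ℍ) * x) * x
      = ((-s * (r k).2 : ℝ) : ℍ) + (((r k).1 + 2 * t * (r k).2 : ℝ) : ℍ) * x
    rw [add_mul, mul_assoc, hsq, mul_sub, ← mul_assoc,
      ← Quaternion.coe_mul, ← Quaternion.coe_mul]
    rw [show (r k).2 * (2 * t) = 2 * t * (r k).2 from mul_comm _ _,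
      show (r k).2 * s = s * (r k).2 from mul_comm _ _,
      show -s * (r k).2 = -(s * (r k).2) from neg_mul _ _,
      Quaternion.coe_add, Quaternion.coe_neg, add_mul]
    abel

/-- A left-regular function is determined on a conjugacy class by its values at two
distinct points of that class. -/
theorem regular_representation_formula (f : ℍ → ℍ) (hf : LeftRegular f)
    (α β γ : ℍ) (hα : ‖α‖ < 1) (hβ : ‖β‖ < 1) (hγ : ‖γ‖ < 1)
    (hab : α ≠ β) (hbg : β ≠ γ) (hag : α ≠ γ)
    (hre1 : α.re = β.re) (hre2 : β.re = γ.re)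
    (hn1 : ‖α‖ = ‖β‖) (hn2 : ‖β‖ = ‖γ‖) :
    f γ = (γ - β) * (α - β)⁻¹ * f α + (α - γ) * (α - β)⁻¹ * f β := by
  obtain ⟨c, _hlim, hc⟩ := hf
  have hαβ : α - β ≠ 0 := sub_ne_zero.mpr hab
  set e : ℍ := (α - β)⁻¹ with he
  have he1 : (α - β) * e = 1 := mul_inv_cancel₀ hαβ
  have he2 : e * (α - β) = 1 := inv_mul_cancel₀ hαβ
  set P : ℍ := (γ - β) * e with hP
  set Q : ℍ := (α - γ) * e with hQ
  have hPQ : P + Q = 1 := by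
    have h : P + Q = (α - β) * e := by rw [hP, hQ]; noncomm_ring
    rw [h, he1]
  have hPQ2 : P * α + Q * β = γ := by
    have h : P * α + Q * β = (γ - β) * (e * (α - β)) + ((α - β) * e) * β := by
      rw [hP, hQ]; noncomm_ring
    rw [h, he1, he2, mul_one, one_mul]; abel
  -- power decomposition
  obtain ⟨a, b, hdec⟩ := quat_pow_decomp α.re (‖α‖ * ‖α‖)
  have hA := hdec α rfl rfl
  have hB := hdec β hre1.symm (by rw [hn1])
  have hG := hdec γ (hre1.trans hre2).symm (by rw [hn1, hn2])
  have hkey : ∀ k, γ ^ k = P * α ^ k + Q * β ^ k := by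
    intro k
    rw [hA, hB, hG]
    have h : P * (((a k : ℝ) : ℍ) + ((b k : ℝ) : ℍ) * α) + Q * (((a k : ℝ) : ℍ) + ((b k : ℝ) : ℍ) * β)
        = (P + Q) * ((a k : ℝ) : ℍ) + (P * ((b k : ℝ) : ℍ)) * α + (Q * ((b k : ℝ) : ℍ)) * β := by
      noncomm_ring
    rw [h, ← Quaternion.coe_commutes (b k) P, ← Quaternion.coe_commutes (b k) Q,
      hPQ, one_mul]
    have h2 : ((a k : ℝ) : ℍ) + ((b k : ℝ) : ℍ) * P * α + ((b k : ℝ) : ℍ) * Q * β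
        = ((a k : ℝ) : ℍ) + ((b k : ℝ) : ℍ) * (P * α + Q * β) := by noncomm_ring
    rw [h2, hPQ2]
  have hfa := hc α hα
  have hfb := hc β hβ
  have hfg := hc γ hγ
  have hnormeq : ∀ x : ℍ, ‖x‖ = ‖α‖ → ∀ k : ℕ, ‖x ^ k * c k‖ = ‖α ^ k * c k‖ := by
    intro x hx k
    rw [norm_mul, norm_mul, norm_pow, norm_pow, hx]
  by_cases hS : Summable (fun k : ℕ => α ^ k * c k)
  · have hSn : Summable (fun k : ℕ => ‖α ^ k * c k‖) := hS.norm
    have hSb : Summable (fun k : ℕ => β ^ k * c k) := by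
      rw [← summable_norm_iff]
      exact (summable_congr (hnormeq β hn1.symm)).mpr hSn
    rw [hfa, hfb, hfg, ← tsum_mul_left, ← tsum_mul_left,
      ← Summable.tsum_add (hS.mul_left P) (hSb.mul_left Q)]
    exact tsum_congr fun k => by rw [← mul_assoc, ← mul_assoc, ← add_mul, ← hkey k]
  · have hnb : ¬ Summable (fun k : ℕ => β ^ k * c k) := fun h => hS <| by
      rw [← summable_norm_iff] at h ⊢
      exact (summable_congr (hnormeq β hn1.symm)).mp h
    have hng : ¬ Summable (fun k : ℕ => γ ^ k * c k) := fun h => hS <| by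
      rw [← summable_norm_iff] at h ⊢
      exact (summable_congr (hnormeq γ (hn1.trans hn2).symm)).mp h
    rw [hfa, hfb, hfg, tsum_eq_zero_of_not_summable hS,
      tsum_eq_zero_of_not_summable hnb, tsum_eq_zero_of_not_summable hng]
    simp
end
end

section
/- Let α, γ ∈ ℍ satisfy Re(α) = Re(γ), |α| = |γ|, and Im(α) ≠ 0 (hence also Im(γ) ≠ 0, so α − star α and γ − star γ are invertible). Then (γ − star α)·(α − star α)⁻¹ = (γ − star γ)⁻¹·(γ − star α) and (α − γ)·(α − star α)⁻¹ = (γ − star γ)⁻¹·(γ − α). -/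
open Quaternion Filter Matrix

noncomputable section

/-! The imaginary parts `a = Im α`, `c = Im γ` of two quaternions with the same real part and
the same norm have the same square, `a² = -|a|² = -|c|² = c²`. Since `α - star α = 2a`,
`γ - star γ = 2c`, `γ - star α = c + a` and `α - γ = a - c`, both identities reduce to
`c (c + a) = (c + a) a` and `c (a - c) = (c - a) a`, which say exactly that `a² = c²`. -/

theorem mul_inv_eq_inv_mul_of_mul_eq_mul {G₀ : Type*} [GroupWithZero G₀] {b c x y : G₀}
    (hbc : b = 0 ↔ c = 0) (h : c * x = y * b) : x * b⁻¹ = c⁻¹ * y := by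
  by_cases hb : b = 0
  · simp [hb, hbc.1 hb] -- both sides are `0`, by the convention `0⁻¹ = 0`
  · rw [mul_inv_eq_iff_eq_mul₀ hb, mul_assoc, eq_inv_mul_iff_mul_eq₀ (hbc.not.1 hb), h]

section Ring

variable {R : Type*} [Ring R] {a c : R}

theorem mul_add_eq_add_mul_of_mul_self_eq (h : a * a = c * c) : c * (c + a) = (c + a) * a := by
  rw [mul_add, add_mul, h, add_comm]

theorem mul_sub_eq_sub_mul_of_mul_self_eq (h : a * a = c * c) : c * (a - c) = (c - a) * a := by
  rw [mul_sub, sub_mul, h]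

theorem two_mul_mul_eq_mul_two_mul {x y : R} (h : c * x = y * a) : 2 * c * x = y * (2 * a) := by
  rw [mul_assoc, h]
  exact (Commute.ofNat_left 2 y).left_comm a

end Ring

namespace Quaternion

variable {R : Type*} [CommRing R] {a b : ℍ[R]}

theorem self_sub_star (a : ℍ[R]) : a - star a = 2 * a.im := by
  ext <;> simp [two_mul]

theorem sub_star_eq_im_add_im (h : a.re = b.re) : b - star a = b.im + a.im := by
  ext <;> simp [h]

theorem sub_eq_im_sub_im (h : a.re = b.re) : a - b = a.im - b.im := by
  ext <;> simp [h]

theorem normSq_im_eq_of_re_eq (h : a.re = b.re) (hn : normSq a = normSq b) :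
    normSq a.im = normSq b.im := by
  simp only [normSq_def', re_im, imI_im, imJ_im, imK_im] at hn ⊢
  linear_combination hn - (a.re + b.re) * h

end Quaternion

theorem conjugate_resolvent_identities_general (α γ : ℍ)
    (hre : α.re = γ.re) (hn : ‖α‖ = ‖γ‖) :
    (γ - star α) * (α - star α)⁻¹ = (γ - star γ)⁻¹ * (γ - star α) ∧
    (α - γ) * (α - star α)⁻¹ = (γ - star γ)⁻¹ * (γ - α) := by
  have hnormSq : normSq α.im = normSq γ.im := normSq_im_eq_of_re_eq hre <| by
    rw [normSq_eq_norm_mul_self, normSq_eq_norm_mul_self, hn]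
  have hsq : α.im * α.im = γ.im * γ.im := by
    rw [← sq, ← sq, im_sq, im_sq, hnormSq]
  have hzero : α - star α = 0 ↔ γ - star γ = 0 := by
    simp only [self_sub_star, mul_eq_zero, ← normSq_eq_zero, hnormSq]
  refine ⟨mul_inv_eq_inv_mul_of_mul_eq_mul hzero ?_, mul_inv_eq_inv_mul_of_mul_eq_mul hzero ?_⟩
  · rw [self_sub_star, self_sub_star, sub_star_eq_im_add_im hre]
    exact two_mul_mul_eq_mul_two_mul (mul_add_eq_add_mul_of_mul_self_eq hsq)
  · rw [self_sub_star, self_sub_star, sub_eq_im_sub_im hre, sub_eq_im_sub_im hre.symm]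
    exact two_mul_mul_eq_mul_two_mul (mul_sub_eq_sub_mul_of_mul_self_eq hsq)

/-- Two elementary identities relating `α, star α, γ, star γ` for conjugate quaternions
`α ∼ γ` with nonzero imaginary parts. -/
theorem conjugate_resolvent_identities (α γ : ℍ)
    (hre : α.re = γ.re) (hn : ‖α‖ = ‖γ‖) (him : α.im ≠ 0) :
    (γ - star α) * (α - star α)⁻¹ = (γ - star γ)⁻¹ * (γ - star α) ∧
    (α - γ) * (α - star α)⁻¹ = (γ - star γ)⁻¹ * (γ - α) :=
  conjugate_resolvent_identities_general α γ hre hn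
end
end

section
/- Let ζ₁, ζ₂ ∈ 𝔻 ⊂ ℂ and let w₁ = g₁ + h₁·j and w₂ = g₂ + h₂·j with g₁, g₂, h₁, h₂ ∈ ℂ (complex numbers identified with quaternions). Then ∑_{k=0}^∞ ζ₁^k · (1 − w₁·star w₂) · (star ζ₂)^k = (1 − g₁·conj(g₂) − h₁·conj(h₂))/(1 − ζ₁·conj(ζ₂)) + ((g₁·h₂ − h₁·g₂)/(1 − ζ₁·ζ₂))·j, where the first summand is a complex quaternion and the second lies in ℂ·j. -/
/-!
Write quaternions as `a + b j` with `a, b ∈ ℂ`; since `j z = conj z · j`, the product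
`1 - w₁ · star w₂` is `A + B j` with `A = 1 - g₁ conj g₂ - h₁ conj h₂` and `B = g₁ h₂ - h₁ g₂`.
Conjugating by `ζ₁ᵏ` on the left and `conj ζ₂ᵏ` on the right multiplies `A` by `(ζ₁ conj ζ₂)ᵏ`,
while `j` turns `conj ζ₂ᵏ` back into `ζ₂ᵏ`, so `B` is multiplied by `(ζ₁ ζ₂)ᵏ`: the kernel is the
sum of two geometric series.
-/

open Quaternion Filter Matrix

noncomputable section

open ComplexConjugate

@[simp] lemma qj_re : qj.re = 0 := rfl
@[simp] lemma qj_imI : qj.imI = 0 := rfl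
@[simp] lemma qj_imJ : qj.imJ = 1 := rfl
@[simp] lemma qj_imK : qj.imK = 0 := rfl

namespace Quaternion

theorem star_coeComplex (z : ℂ) : star (z : ℍ) = ↑(conj z) := by
  ext <;> simp

theorem coeComplex_pow (z : ℂ) (k : ℕ) : ((z ^ k : ℂ) : ℍ) = (z : ℍ) ^ k :=
  map_pow ofComplex z k

theorem hasSum_coeComplex {α : Type*} {f : α → ℂ} {a : ℂ} (h : HasSum f a) :
    HasSum (fun k => (f k : ℍ)) a :=
  h.map ofComplex ofComplex.toLinearMap.continuous_of_finiteDimensional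

end Quaternion

theorem one_sub_mul_star_coeComplex_add_mul_qj (g₁ h₁ g₂ h₂ : ℂ) :
    1 - ((g₁ : ℍ) + h₁ * qj) * star ((g₂ : ℍ) + h₂ * qj) =
      ↑(1 - g₁ * conj g₂ - h₁ * conj h₂) + ↑(g₁ * h₂ - h₁ * g₂) * qj := by
  ext <;> simp <;> ring

theorem coeComplex_mul_add_mul_qj_mul (z A B w : ℂ) :
    (z : ℍ) * (A + B * qj) * w = ↑(z * A * w) + ↑(z * B * conj w) * qj := by
  ext <;> simp

theorem hasSum_coeComplex_pow_mul_add_mul_qj_mul_star_pow {ζ₁ ζ₂ : ℂ} (hζ₁ : ‖ζ₁‖ < 1)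
    (hζ₂ : ‖ζ₂‖ < 1) (A B : ℂ) :
    HasSum (fun k : ℕ => (ζ₁ : ℍ) ^ k * (A + B * qj) * star (ζ₂ : ℍ) ^ k)
      (↑(A / (1 - ζ₁ * conj ζ₂)) + ↑(B / (1 - ζ₁ * ζ₂)) * qj) := by
  have hζ : ∀ z : ℂ, ‖z‖ = ‖ζ₂‖ → ‖ζ₁ * z‖ < 1 := fun z hz => by
    rw [norm_mul, hz]
    exact mul_lt_one_of_nonneg_of_lt_one_left (norm_nonneg _) hζ₁ hζ₂.le
  have hA : HasSum (fun k => A * (ζ₁ * conj ζ₂) ^ k) (A / (1 - ζ₁ * conj ζ₂)) :=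
    (hasSum_geometric_of_norm_lt_one (hζ _ (RCLike.norm_conj ζ₂))).mul_left A
  have hB : HasSum (fun k => B * (ζ₁ * ζ₂) ^ k) (B / (1 - ζ₁ * ζ₂)) :=
    (hasSum_geometric_of_norm_lt_one (hζ _ rfl)).mul_left B
  convert (hasSum_coeComplex hA).add ((hasSum_coeComplex hB).mul_right qj) using 2 with k
  rw [star_coeComplex, ← coeComplex_pow, ← coeComplex_pow, coeComplex_mul_add_mul_qj_mul,
    map_pow, Complex.conj_conj]
  ring_nf

/-- Decomposition of the Pick kernel at complex points: for `w₁ = g₁ + h₁ j` and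
`w₂ = g₂ + h₂ j` with complex `gᵢ, hᵢ` and complex points `ζ₁, ζ₂` of the unit disk,
the kernel splits into a complex part and a part in `ℂ·j`. -/
theorem slice_kernel_decomposition (ζ₁ ζ₂ : ℂ) (hζ₁ : ‖ζ₁‖ < 1) (hζ₂ : ‖ζ₂‖ < 1)
    (g₁ g₂ h₁ h₂ : ℂ) (w₁ w₂ : ℍ)
    (hw₁ : w₁ = (g₁ : ℍ) + (h₁ : ℍ) * qj) (hw₂ : w₂ = (g₂ : ℍ) + (h₂ : ℍ) * qj) :
    (∑' k : ℕ, (ζ₁ : ℍ) ^ k * (1 - w₁ * star w₂) * (star (ζ₂ : ℍ)) ^ k) =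
      (((1 - g₁ * (starRingEnd ℂ) g₂ - h₁ * (starRingEnd ℂ) h₂) /
          (1 - ζ₁ * (starRingEnd ℂ) ζ₂) : ℂ) : ℍ) +
      (((g₁ * h₂ - h₁ * g₂) / (1 - ζ₁ * ζ₂) : ℂ) : ℍ) * qj := by
  subst hw₁ hw₂
  rw [one_sub_mul_star_coeComplex_add_mul_qj]
  exact (hasSum_coeComplex_pow_mul_add_mul_qj_mul_star_pow hζ₁ hζ₂ _ _).tsum_eq
end
end

section
/- Let s, h : 𝔻 → ℂ be analytic functions with |s(ζ)| ≤ 1 and |h(ζ)| ≤ 1 on 𝔻, with Taylor coefficient sequences (s_k) and (h_k) at 0, and let g : ℕ → ℍ be the sequence g_k = s_k + h_k·j. Then I_n − T_n(g)·T_n(g)* is positive semidefinite in the quaternionic sense for every n ≥ 1 if and only if for every n ≥ 1 the 2n×2n complex block matrix [[I_n − T_n(s)·T_n(s)* − T_n(h)·T_n(h)*, T_n(s)·T_n(h)ᵀ − T_n(h)·T_n(s)ᵀ], [conj(T_n(h))·T_n(s)* − conj(T_n(s))·T_n(h)*, I_n − conj(T_n(s))·T_n(s)ᵀ − conj(T_n(h))·T_n(h)ᵀ]]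 is positive semidefinite over ℂ. -/
open Quaternion Filter Matrix ComplexOrder

noncomputable section

/-!
Write a quaternion as `a + b j` with `a, b ∈ ℂ`. The real-linear bijection `x + y j ↦ (x, -conj y)`
from `ℍⁿ` onto `ℂ²ⁿ` preserves norms and turns a quaternionic matrix `M = A + B j` into its complex
adjoint `χ(M) = [[A, B], [-conj B, conj A]]`, with `χ(Mᴴ) = χ(M)ᴴ`. As `⟨v, (1 - G Gᴴ) v⟩` equals
`‖v‖² - ‖Gᴴ v‖²` over both fields, the quaternionic form of `1 - G Gᴴ` at `v` is the complex form of
`1 - χ(G) χ(G)ᴴ` at the image of `v`. For `G = T_n(g)` the latter matrix is the block matrix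
of the statement.
-/

namespace Quaternion

/-- The decomposition `q = cfst q + csnd q * qj` of a quaternion into two complex numbers. -/
def cfst : ℍ →+ ℂ :=
  AddMonoidHom.mk' (fun q => ⟨q.re, q.imI⟩) fun p q => by apply Complex.ext <;> simp

def csnd : ℍ →+ ℂ :=
  AddMonoidHom.mk' (fun q => ⟨q.imJ, q.imK⟩) fun p q => by apply Complex.ext <;> simp

@[simp] lemma cfst_add_mul_qj (a b : ℂ) : cfst ((a : ℍ) + b * qj) = a := by
  apply Complex.ext <;> simp [cfst, Quaternion.re_mul, Quaternion.imI_mul] <;> simp [qj]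

@[simp] lemma csnd_add_mul_qj (a b : ℂ) : csnd ((a : ℍ) + b * qj) = b := by
  apply Complex.ext <;> simp [csnd, Quaternion.imJ_mul, Quaternion.imK_mul] <;> simp [qj]

lemma cfst_mul (p q : ℍ) :
    cfst (p * q) = cfst p * cfst q - csnd p * (starRingEnd ℂ) (csnd q) := by
  apply Complex.ext <;> simp [cfst, csnd] <;> ring

lemma csnd_mul (p q : ℍ) :
    csnd (p * q) = cfst p * csnd q + csnd p * (starRingEnd ℂ) (cfst q) := by
  apply Complex.ext <;> simp [cfst, csnd] <;> ring

@[simp] lemma cfst_star (q : ℍ) : cfst (star q) = (starRingEnd ℂ) (cfst q) := by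
  apply Complex.ext <;> simp [cfst]

@[simp] lemma csnd_star (q : ℍ) : csnd (star q) = -csnd q := by
  apply Complex.ext <;> simp [csnd]

lemma normSq_eq_normSq_cfst_add_normSq_csnd (q : ℍ) :
    normSq q = Complex.normSq (cfst q) + Complex.normSq (csnd q) := by
  simp [normSq_def', Complex.normSq_apply, cfst, csnd]; ring

end Quaternion

namespace Matrix

variable {m n : Type*}

def complexAdjoint (M : Matrix m n ℍ) : Matrix (m ⊕ m) (n ⊕ n) ℂ :=
  fromBlocks (M.map cfst) (M.map csnd) (-(M.map csnd).map (starRingEnd ℂ))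
    ((M.map cfst).map (starRingEnd ℂ))

/-- `x + y * qj ↦ (x, -conj y)`: the sign and conjugation make `complexAdjoint` intertwine the
quaternionic and the complex actions. -/
def complexAdjointVec (v : n → ℍ) : n ⊕ n → ℂ :=
  Sum.elim (fun i => cfst (v i)) fun i => -(starRingEnd ℂ) (csnd (v i))

lemma complexAdjointVec_surjective : Function.Surjective (complexAdjointVec (n := n)) := by
  intro u
  refine ⟨fun i => (u (Sum.inl i) : ℍ) + (-(starRingEnd ℂ) (u (Sum.inr i)) : ℂ) * qj, ?_⟩
  ext (i | i) <;> simp [complexAdjointVec]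

lemma complexAdjoint_conjTranspose (M : Matrix m n ℍ) :
    Mᴴ.complexAdjoint = M.complexAdjointᴴ := by
  ext (i | i) (j | j) <;> simp [complexAdjoint]

variable [Fintype n]

lemma complexAdjointVec_mulVec (M : Matrix m n ℍ) (v : n → ℍ) :
    complexAdjointVec (M *ᵥ v) = M.complexAdjoint *ᵥ complexAdjointVec v := by
  ext (i | i)
  · simp [complexAdjointVec, complexAdjoint, mulVec, dotProduct, map_sum, cfst_mul,
      Finset.sum_add_distrib, sub_eq_add_neg]
  · simp [complexAdjointVec, complexAdjoint, mulVec, dotProduct, map_sum, csnd_mul,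
      Finset.sum_add_distrib]

lemma star_complexAdjointVec_dotProduct (v : n → ℍ) :
    star (complexAdjointVec v) ⬝ᵥ complexAdjointVec v = ((∑ i, normSq (v i) : ℝ) : ℂ) := by
  simp [complexAdjointVec, dotProduct, Fintype.sum_sum_type,
    normSq_eq_normSq_cfst_add_normSq_csnd, Complex.normSq_eq_conj_mul_self, Complex.mul_conj,
    Finset.sum_add_distrib]

lemma sum_star_mul_mul_eq_star_dotProduct_mulVec {R : Type*} [NonUnitalSemiring R] [Star R]
    (P : Matrix n n R) (v : n → R) :
    ∑ i, ∑ j, star (v i) * P i j * v j = star v ⬝ᵥ (P *ᵥ v) := by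
  simp [dotProduct, mulVec, Finset.mul_sum, mul_assoc]

lemma star_dotProduct_one_sub_mul_conjTranspose_mulVec {R : Type*} [Ring R] [StarRing R]
    [DecidableEq n] [Fintype m]
    (G : Matrix n m R) (v : n → R) :
    star v ⬝ᵥ ((1 - G * Gᴴ) *ᵥ v) = star v ⬝ᵥ v - star (Gᴴ *ᵥ v) ⬝ᵥ (Gᴴ *ᵥ v) := by
  rw [sub_mulVec, one_mulVec, dotProduct_sub, ← mulVec_mulVec, dotProduct_mulVec, star_mulVec,
    conjTranspose_conjTranspose]

end Matrix

open Matrix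

lemma Quaternion.star_dotProduct_self {n : Type*} [Fintype n] (v : n → ℍ) :
    star v ⬝ᵥ v = ((∑ i, normSq (v i) : ℝ) : ℍ) := by
  simp only [dotProduct, Pi.star_apply, star_mul_self]
  exact (map_sum (algebraMap ℝ ℍ) _ _).symm

theorem qPosSemidef_one_sub_mul_conjTranspose_iff {n : ℕ} {m : Type*} [Fintype m]
    (G : Matrix (Fin n) m ℍ) :
    QPosSemidef (1 - G * Gᴴ) ↔ (1 - G.complexAdjoint * G.complexAdjointᴴ).PosSemidef := by
  set defect : (Fin n → ℍ) → ℝ := fun v => ∑ i, normSq (v i) - ∑ i, normSq ((Gᴴ *ᵥ v) i)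
  have hquat (v : Fin n → ℍ) :
      ∑ i, ∑ j, star (v i) * (1 - G * Gᴴ : Matrix (Fin n) (Fin n) ℍ) i j * v j =
        (defect v : ℍ) := by
    rw [sum_star_mul_mul_eq_star_dotProduct_mulVec,
      star_dotProduct_one_sub_mul_conjTranspose_mulVec, Quaternion.star_dotProduct_self,
      Quaternion.star_dotProduct_self]
    simp [defect]
  have hcplx (v : Fin n → ℍ) : star (complexAdjointVec v) ⬝ᵥ
      ((1 - G.complexAdjoint * G.complexAdjointᴴ) *ᵥ complexAdjointVec v) = (defect v : ℂ) := by
    rw [star_dotProduct_one_sub_mul_conjTranspose_mulVec, ← complexAdjoint_conjTranspose,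
      ← complexAdjointVec_mulVec, star_complexAdjointVec_dotProduct,
      star_complexAdjointVec_dotProduct]
    simp [defect]
  have hherm : (1 - G.complexAdjoint * G.complexAdjointᴴ).IsHermitian :=
    isHermitian_one.sub (isHermitian_mul_conjTranspose_self _)
  rw [posSemidef_iff_dotProduct_mulVec, complexAdjointVec_surjective.forall]
  simp only [QPosSemidef, hquat, hcplx, Quaternion.coe_inj, Complex.zero_le_real]
  simp [hherm]

lemma toeplitz_map {R S : Type*} [Zero R] [Zero S] (f : R → S) (hf : f 0 = 0) (n : ℕ)
    (g : ℕ → R) : (toeplitz n g).map f = toeplitz n (f ∘ g) := by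
  ext i j
  simp only [toeplitz, map_apply, of_apply]
  split_ifs <;> simp [hf]

lemma complexAdjoint_toeplitz (n : ℕ) (sc hc : ℕ → ℂ) :
    (toeplitz n fun k => (sc k : ℍ) + (hc k : ℍ) * qj).complexAdjoint =
      fromBlocks (toeplitz n sc) (toeplitz n hc) (-(toeplitz n hc).map (starRingEnd ℂ))
        ((toeplitz n sc).map (starRingEnd ℂ)) := by
  simp only [complexAdjoint, toeplitz_map _ (map_zero _), Function.comp_def, cfst_add_mul_qj,
    csnd_add_mul_qj]

lemma one_sub_fromBlocks_mul_conjTranspose {m n : Type*} [Fintype n] [DecidableEq m]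
    (S H : Matrix m n ℂ) :
    1 - fromBlocks S H (-H.map (starRingEnd ℂ)) (S.map (starRingEnd ℂ)) *
        (fromBlocks S H (-H.map (starRingEnd ℂ)) (S.map (starRingEnd ℂ)))ᴴ =
      fromBlocks (1 - S * Sᴴ - H * Hᴴ) (S * Hᵀ - H * Sᵀ)
        (H.map (starRingEnd ℂ) * Sᴴ - S.map (starRingEnd ℂ) * Hᴴ)
        (1 - S.map (starRingEnd ℂ) * Sᵀ - H.map (starRingEnd ℂ) * Hᵀ) := by
  rw [fromBlocks_conjTranspose, fromBlocks_multiply, ← fromBlocks_one]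
  ext (i | i) (j | j) <;> simp [mul_apply, one_apply] <;> ring

theorem quaternionic_schur_block_criterion_general (sc hc : ℕ → ℂ)
    (g : ℕ → ℍ) (hg : ∀ k, g k = (sc k : ℍ) + (hc k : ℍ) * qj) :
    (∀ n : ℕ, 1 ≤ n →
        QPosSemidef ((1 : Matrix (Fin n) (Fin n) ℍ) - toeplitz n g * (toeplitz n g)ᴴ)) ↔
    (∀ n : ℕ, 1 ≤ n →
      (Matrix.fromBlocks
        (1 - toeplitz n sc * (toeplitz n sc)ᴴ - toeplitz n hc * (toeplitz n hc)ᴴ)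
        (toeplitz n sc * (toeplitz n hc)ᵀ - toeplitz n hc * (toeplitz n sc)ᵀ)
        ((toeplitz n hc).map (starRingEnd ℂ) * (toeplitz n sc)ᴴ -
          (toeplitz n sc).map (starRingEnd ℂ) * (toeplitz n hc)ᴴ)
        (1 - (toeplitz n sc).map (starRingEnd ℂ) * (toeplitz n sc)ᵀ -
          (toeplitz n hc).map (starRingEnd ℂ) * (toeplitz n hc)ᵀ)).PosSemidef) := by
  obtain rfl : g = fun k => (sc k : ℍ) + (hc k : ℍ) * qj := funext hg
  refine forall₂_congr fun n _ => ?_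
  rw [qPosSemidef_one_sub_mul_conjTranspose_iff, complexAdjoint_toeplitz,
    one_sub_fromBlocks_mul_conjTranspose]

/-- For `g = s + h·j` built from two complex Schur-class functions with Taylor coefficients
`sc`, `hc`, contractivity of all quaternionic Toeplitz matrices `T_n(g)` is equivalent to
positive semidefiniteness of the associated `2n × 2n` complex block matrices. -/
theorem quaternionic_schur_block_criterion (s h : ℂ → ℂ) (sc hc : ℕ → ℂ)
    (hsc : ∀ ζ : ℂ, ‖ζ‖ < 1 → HasSum (fun k : ℕ => sc k * ζ ^ k) (s ζ))
    (hhc : ∀ ζ : ℂ, ‖ζ‖ < 1 → HasSum (fun k : ℕ => hc k * ζ ^ k) (h ζ))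
    (hs1 : ∀ ζ : ℂ, ‖ζ‖ < 1 → ‖s ζ‖ ≤ 1) (hh1 : ∀ ζ : ℂ, ‖ζ‖ < 1 → ‖h ζ‖ ≤ 1)
    (g : ℕ → ℍ) (hg : ∀ k, g k = (sc k : ℍ) + (hc k : ℍ) * qj) :
    (∀ n : ℕ, 1 ≤ n →
        QPosSemidef ((1 : Matrix (Fin n) (Fin n) ℍ) - toeplitz n g * (toeplitz n g)ᴴ)) ↔
    (∀ n : ℕ, 1 ≤ n →
      (Matrix.fromBlocks
        (1 - toeplitz n sc * (toeplitz n sc)ᴴ - toeplitz n hc * (toeplitz n hc)ᴴ)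
        (toeplitz n sc * (toeplitz n hc)ᵀ - toeplitz n hc * (toeplitz n sc)ᵀ)
        ((toeplitz n hc).map (starRingEnd ℂ) * (toeplitz n sc)ᴴ -
          (toeplitz n sc).map (starRingEnd ℂ) * (toeplitz n hc)ᴴ)
        (1 - (toeplitz n sc).map (starRingEnd ℂ) * (toeplitz n sc)ᵀ -
          (toeplitz n hc).map (starRingEnd ℂ) * (toeplitz n hc)ᵀ)).PosSemidef) :=
  quaternionic_schur_block_criterion_general sc hc g hg
end
end
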